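/- arXiv:math/0608616 — 6 statements merged into one kernel-verified Lean document; each statement's English description precedes it below -/
import Mathlib

section
/- Let E be a vector space with basis (e_i) over ℝ. If player II has a winning strategy in the subsequence game (SG) to make the outcome lie in a set 𝒜 of infinite block sequences, then player II has a winning strategy in the infinite asymptotic game (IAG) to make the outcome lie in 𝒜. -/
/-!
STATEMENT 0: If player II has a winning strategy in the subsequence game (SG)
to make the outcome lie in a set `𝒜` of infinite block sequences, then player II
has a winning strategy in the infinite asymptotic game (IAG) to make the outcome
lie in `𝒜`.
-/

namespace Stmt0

variable {E : Type*} [AddCommGroup E] [Module ℝ E]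

/-- `n < x`: every index in the support of `x` (w.r.t. the basis `b`) exceeds `n`. -/
def natLt (b : Module.Basis ℕ ℝ E) (n : ℕ) (x : E) : Prop :=
  ∀ i ∈ (b.repr x).support, n < i

/-- `x < y` for vectors: the support of `x` lies entirely below that of `y`. -/
def blockLt (b : Module.Basis ℕ ℝ E) (x y : E) : Prop :=
  ∀ i ∈ (b.repr x).support, ∀ j ∈ (b.repr y).support, i < j

/-- An infinite block sequence: nonzero vectors with successive supports. -/
def IsBlockSeq (b : Module.Basis ℕ ℝ E) (x : ℕ → E) : Prop :=
  (∀ n, x n ≠ 0) ∧ ∀ n, blockLt b (x n) (x (n + 1))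

/-- The vectors played by II in (IAG) following strategy `τ` against I's moves `n`. -/
def iagPlay (τ : List ℕ → E) (n : ℕ → ℕ) (k : ℕ) : E :=
  τ (List.ofFn fun i : Fin (k + 1) => n i)

/-- II has a winning strategy in the infinite asymptotic game to play into `𝒜`:
all plays following the strategy are legal (block sequences beyond I's numbers)
and the outcome lies in `𝒜`. -/
def IIWinsIAG (b : Module.Basis ℕ ℝ E) (𝒜 : Set (ℕ → E)) : Prop :=
  ∃ τ : List ℕ → E, ∀ n : ℕ → ℕ,
    IsBlockSeq b (iagPlay τ n) ∧ (∀ k, natLt b (n k) (iagPlay τ n k)) ∧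
      iagPlay τ n ∈ 𝒜

/-- The vectors played by II in (SG) following strategy `σ` against I's digits `ε`
(II moves first, so the `k`-th vector depends on the first `k` digits of I). -/
def sgPlay (σ : List Bool → E) (ε : ℕ → Bool) (k : ℕ) : E :=
  σ (List.ofFn fun i : Fin k => ε i)

/-- II has a winning strategy in the subsequence game to play into `𝒜`: II always
produces a block sequence, and whenever I selects an infinite set of indices
(enumerated increasingly by `φ`), the selected subsequence lies in `𝒜`. -/
def IIWinsSG (b : Module.Basis ℕ ℝ E) (𝒜 : Set (ℕ → E)) : Prop :=
  ∃ σ : List Bool → E, ∀ ε : ℕ → Bool,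
    IsBlockSeq b (sgPlay σ ε) ∧
    ∀ φ : ℕ → ℕ, StrictMono φ → (∀ k, ε (φ k) = true) →
      (∀ n, ε n = true → ∃ k, φ k = n) → (fun k => sgPlay σ ε (φ k)) ∈ 𝒜

end Stmt0

namespace Stmt0Aux
open Stmt0

variable {E : Type*} [AddCommGroup E] [Module ℝ E]

noncomputable def dig (b : Module.Basis ℕ ℝ E) (σ : List Bool → E) (n : ℕ → ℕ) (L : List Bool) : Bool :=
  @decide (natLt b (n (L.count true)) (σ L)) (Classical.propDecidable _)

noncomputable def digs (b : Module.Basis ℕ ℝ E) (σ : List Bool → E) (n : ℕ → ℕ) : ℕ → List Bool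
  | 0 => []
  | (i+1) => digs b σ n i ++ [dig b σ n (digs b σ n i)]

noncomputable def epsn (b : Module.Basis ℕ ℝ E) (σ : List Bool → E) (n : ℕ → ℕ) (i : ℕ) : Bool :=
  dig b σ n (digs b σ n i)

lemma digs_succ (b : Module.Basis ℕ ℝ E) (σ : List Bool → E) (n : ℕ → ℕ) (i : ℕ) :
    digs b σ n (i+1) = digs b σ n i ++ [epsn b σ n i] := rfl

lemma ofFn_epsn (b : Module.Basis ℕ ℝ E) (σ : List Bool → E) (n : ℕ → ℕ) :
    ∀ k, (List.ofFn fun j : Fin k => epsn b σ n j) = digs b σ n k := by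
  intro k
  induction k with
  | zero => rfl
  | succ k ih =>
    rw [List.ofFn_succ', digs_succ, List.concat_eq_append]
    simp [ih]

lemma sgPlay_epsn (b : Module.Basis ℕ ℝ E) (σ : List Bool → E) (n : ℕ → ℕ) (i : ℕ) :
    sgPlay σ (epsn b σ n) i = σ (digs b σ n i) := by
  rw [sgPlay, ofFn_epsn]

lemma count_digs (b : Module.Basis ℕ ℝ E) (σ : List Bool → E) (n : ℕ → ℕ) (i : ℕ) :
    (digs b σ n i).count true = Nat.count (fun j => epsn b σ n j = true) i := by
  induction i with
  | zero => rfl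
  | succ i ih =>
    rw [digs_succ, List.count_append, Nat.count_succ, ih]
    by_cases h : epsn b σ n i = true <;> simp [h]

lemma digs_agree (b : Module.Basis ℕ ℝ E) (σ : List Bool → E) (n n' : ℕ → ℕ) (i : ℕ)
    (h : ∀ m < i, n ((digs b σ n m).count true) = n' ((digs b σ n m).count true)) :
    digs b σ n i = digs b σ n' i := by
  induction i with
  | zero => rfl
  | succ i ih =>
    have hd : digs b σ n i = digs b σ n' i := ih (fun m hm => h m (hm.trans (Nat.lt_succ_self i)))
    rw [digs_succ, digs_succ, epsn, epsn, ← hd, dig, dig, h i (Nat.lt_succ_self i)]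

lemma epsn_agree (b : Module.Basis ℕ ℝ E) (σ : List Bool → E) (n n' : ℕ → ℕ) (i : ℕ)
    (h : ∀ m < i + 1, n ((digs b σ n m).count true) = n' ((digs b σ n m).count true))
    {m : ℕ} (hm : m ≤ i) : epsn b σ n m = epsn b σ n' m := by
  have hd : digs b σ n m = digs b σ n' m :=
    digs_agree b σ n n' m (fun l hl => h l (by omega))
  rw [epsn, epsn, ← hd, dig, dig, h m (by omega)]

lemma support_nonempty (b : Module.Basis ℕ ℝ E) {x : E} (hx : x ≠ 0) :
    (b.repr x).support.Nonempty := by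
  rw [Finsupp.support_nonempty_iff]
  simpa using hx

lemma blockSeq_le (b : Module.Basis ℕ ℝ E) {x : ℕ → E} (hx : IsBlockSeq b x) :
    ∀ j, ∀ i ∈ (b.repr (x j)).support, j ≤ i := by
  intro j
  induction j with
  | zero => intro i _; exact Nat.zero_le i
  | succ j ih =>
    intro i hi
    obtain ⟨l, hl⟩ := support_nonempty b (hx.1 j)
    exact Nat.succ_le_of_lt (lt_of_le_of_lt (ih l hl) (hx.2 j l hl i hi))

lemma blockLt_of_lt (b : Module.Basis ℕ ℝ E) {x : ℕ → E} (hx : IsBlockSeq b x)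
    {m m' : ℕ} (h : m < m') : blockLt b (x m) (x m') := by
  induction m' with
  | zero => omega
  | succ m' ih =>
    rcases Nat.lt_succ_iff_lt_or_eq.mp h with h' | h'
    · intro i hi j hj
      obtain ⟨l, hl⟩ := support_nonempty b (hx.1 m')
      exact lt_trans (ih h' i hi l hl) (hx.2 m' l hl j hj)
    · subst h'; exact hx.2 m

lemma epsn_infinite (b : Module.Basis ℕ ℝ E) (σ : List Bool → E) (n : ℕ → ℕ)
    (hbs : IsBlockSeq b (fun i => σ (digs b σ n i))) :
    {i | epsn b σ n i = true}.Infinite := by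
  by_contra hfin
  rw [Set.not_infinite] at hfin
  obtain ⟨N, hN⟩ := hfin.bddAbove
  have hfalse : ∀ i, N < i → epsn b σ n i = false := by
    intro i hi
    by_contra h
    exact absurd (hN (eq_true_of_ne_false h)) (Nat.not_le_of_lt hi)
  set c := (digs b σ n (N+1)).count true with hc
  have hconst : ∀ i, N + 1 ≤ i → (digs b σ n i).count true = c := by
    intro i hi
    induction i, hi using Nat.le_induction with
    | base => rfl
    | succ i hi ih =>
      rw [digs_succ, List.count_append, hfalse i (by omega), ih]
      simp
  set j := max (N+1) (n c + 1) with hj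
  have hcnt : (digs b σ n j).count true = c := hconst j (le_max_left _ _)
  have htrue : epsn b σ n j = true := by
    have hnat : natLt b (n c) (σ (digs b σ n j)) := by
      intro i hi
      have := blockSeq_le b hbs j i hi
      omega
    rw [epsn, dig, hcnt]
    exact @decide_eq_true _ (Classical.propDecidable _) hnat
  have := hfalse j (by omega)
  rw [htrue] at this
  exact Bool.noConfusion this

end Stmt0Aux

lemma count_congr (p q : ℕ → Prop) [DecidablePred p] [DecidablePred q] (a : ℕ)
    (h : ∀ m < a, p m ↔ q m) : Nat.count p a = Nat.count q a := by
  induction a with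
  | zero => rfl
  | succ a ih =>
    rw [Nat.count_succ, Nat.count_succ, ih (fun m hm => h m (by omega))]
    by_cases hp : p a
    · rw [if_pos hp, if_pos ((h a (by omega)).mp hp)]
    · rw [if_neg hp, if_neg (fun hq => hp ((h a (by omega)).mpr hq))]


open Stmt0 Stmt0Aux


theorem stmt0 {E : Type*} [AddCommGroup E] [Module ℝ E] (b : Module.Basis ℕ ℝ E)
    (𝒜 : Set (ℕ → E)) (h : Stmt0.IIWinsSG b 𝒜) : Stmt0.IIWinsIAG b 𝒜 := by
  obtain ⟨σ, hσ⟩ := h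
  have hbs : ∀ n : ℕ → ℕ, IsBlockSeq b (fun i => σ (Stmt0Aux.digs b σ n i)) := by
    intro n
    have h1 := (hσ (Stmt0Aux.epsn b σ n)).1
    have he : sgPlay σ (Stmt0Aux.epsn b σ n) = fun i => σ (Stmt0Aux.digs b σ n i) :=
      funext (Stmt0Aux.sgPlay_epsn b σ n)
    rwa [he] at h1
  have hinf : ∀ n : ℕ → ℕ, {i | Stmt0Aux.epsn b σ n i = true}.Infinite := fun n =>
    Stmt0Aux.epsn_infinite b σ n (hbs n)
  set P : (ℕ → ℕ) → ℕ → Prop := fun n i => Stmt0Aux.epsn b σ n i = true with hP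
  set τ : List ℕ → E := fun L =>
    σ (Stmt0Aux.digs b σ (fun j => L.getD j 0)
      (Nat.nth (P (fun j => L.getD j 0)) (L.length - 1))) with hτ
  have hcount : ∀ (n : ℕ → ℕ) (k : ℕ), Nat.count (P n) (Nat.nth (P n) k) = k := fun n k =>
    Nat.count_nth (fun hf => absurd hf (hinf n))
  refine ⟨τ, fun n => ?_⟩
  have key : ∀ k, iagPlay τ n k = σ (Stmt0Aux.digs b σ n (Nat.nth (P n) k)) := by
    intro k
    set L := (List.ofFn fun i : Fin (k+1) => n i) with hL
    set n' : ℕ → ℕ := fun j => L.getD j 0 with hn'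
    have hlen : L.length = k + 1 := by simp [hL]
    have hagree : ∀ j ≤ k, n j = n' j := by
      intro j hj
      have hjlt : j < L.length := by omega
      simp only [hn']
      rw [List.getD_eq_getElem L 0 hjlt]
      simp only [hL, List.getElem_ofFn]
    set a := Nat.nth (P n) k with ha
    have hcle : ∀ m, m ≤ a → (Stmt0Aux.digs b σ n m).count true ≤ k := by
      intro m hm
      rw [Stmt0Aux.count_digs]
      calc Nat.count (P n) m ≤ Nat.count (P n) a := Nat.count_monotone _ hm
        _ = k := hcount n k
    have hyp : ∀ m < a + 1,
        n ((Stmt0Aux.digs b σ n m).count true) = n' ((Stmt0Aux.digs b σ n m).count true) :=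
      fun m hm => hagree _ (hcle m (by omega))
    have hdigs : Stmt0Aux.digs b σ n a = Stmt0Aux.digs b σ n' a :=
      Stmt0Aux.digs_agree b σ n n' a (fun m hm => hyp m (by omega))
    have heps : ∀ m ≤ a, Stmt0Aux.epsn b σ n m = Stmt0Aux.epsn b σ n' m :=
      fun m hm => Stmt0Aux.epsn_agree b σ n n' a hyp hm
    have hPa : P n a := Nat.nth_mem_of_infinite (hinf n) k
    have hq : P n' a := by rw [hP]; rw [hP] at hPa; rw [← heps a le_rfl]; exact hPa
    have hcq : Nat.count (P n') a = k := by
      rw [count_congr (P n') (P n) a (fun m hm => by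
        simp only [hP]; rw [heps m (le_of_lt hm)])]
      exact hcount n k
    have hnth' : Nat.nth (P n') k = a := by
      rw [← hcq]; exact Nat.nth_count hq
    show τ L = σ (Stmt0Aux.digs b σ n a)
    rw [hτ]
    simp only [hlen, Nat.add_sub_cancel]
    rw [← hn', hnth', ← hdigs]
  have houtcome : iagPlay τ n = fun k => sgPlay σ (Stmt0Aux.epsn b σ n) (Nat.nth (P n) k) := by
    funext k; rw [key k, Stmt0Aux.sgPlay_epsn]
  have hbs' : IsBlockSeq b (sgPlay σ (Stmt0Aux.epsn b σ n)) := (hσ (Stmt0Aux.epsn b σ n)).1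
  refine ⟨?_, ?_, ?_⟩
  · rw [houtcome]
    refine ⟨fun k => hbs'.1 _, fun k => ?_⟩
    exact Stmt0Aux.blockLt_of_lt b hbs' (Nat.nth_strictMono (hinf n) (lt_add_one k))
  · intro k
    rw [key k]
    have hPa : P n (Nat.nth (P n) k) := Nat.nth_mem_of_infinite (hinf n) k
    have hdec : Stmt0Aux.dig b σ n (Stmt0Aux.digs b σ n (Nat.nth (P n) k)) = true := hPa
    have hnat := @of_decide_eq_true
      (natLt b (n ((Stmt0Aux.digs b σ n (Nat.nth (P n) k)).count true))
        (σ (Stmt0Aux.digs b σ n (Nat.nth (P n) k)))) (Classical.propDecidable _) hdec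
    have hc : (Stmt0Aux.digs b σ n (Nat.nth (P n) k)).count true = k := by
      rw [Stmt0Aux.count_digs]; exact hcount n k
    rwa [hc] at hnat
  · rw [houtcome]
    exact (hσ _).2 (Nat.nth (P n)) (Nat.nth_strictMono (hinf n))
      (fun k => Nat.nth_mem_of_infinite (hinf n) k)
      (fun m hm => ⟨Nat.count (P n) m, Nat.nth_count hm⟩)
end

section
/- Let E be a vector space with basis (e_i). If player I has a winning strategy in the infinite asymptotic game (IAG) to make the outcome lie in a set 𝒜 of infinite block sequences, then player I has a winning strategy in the subsequence game (SG) to make the outcome lie in 𝒜. -/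
/-!
STATEMENT 1: If player I has a winning strategy in the infinite asymptotic game
(IAG) to make the outcome lie in a set `𝒜` of infinite block sequences, then
player I has a winning strategy in the subsequence game (SG) to make the outcome
lie in `𝒜`.
-/

namespace Stmt1

variable {E : Type*} [AddCommGroup E] [Module ℝ E]

def natLt (b : Module.Basis ℕ ℝ E) (n : ℕ) (x : E) : Prop :=
  ∀ i ∈ (b.repr x).support, n < i

def blockLt (b : Module.Basis ℕ ℝ E) (x y : E) : Prop :=
  ∀ i ∈ (b.repr x).support, ∀ j ∈ (b.repr y).support, i < j

def IsBlockSeq (b : Module.Basis ℕ ℝ E) (x : ℕ → E) : Prop :=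
  (∀ n, x n ≠ 0) ∧ ∀ n, blockLt b (x n) (x (n + 1))

/-- I has a winning strategy in (IAG) to play into `𝒜`: there is a strategy
`σ` (producing I's next natural number from the vectors played so far by II)
such that every legal play of II against `σ` has its outcome in `𝒜`. -/
def IWinsIAG (b : Module.Basis ℕ ℝ E) (𝒜 : Set (ℕ → E)) : Prop :=
  ∃ σ : List E → ℕ, ∀ x : ℕ → E, IsBlockSeq b x →
    (∀ k, natLt b (σ (List.ofFn fun i : Fin k => x i)) (x k)) → x ∈ 𝒜

/-- I has a winning strategy in (SG) to play into `𝒜`: there is a strategy `σ`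
(producing the digit `ε_n` from II's vectors `x_0, …, x_n`) such that for every
block sequence played by II, the set of selected indices is infinite and the
selected subsequence lies in `𝒜`. -/
def IWinsSG (b : Module.Basis ℕ ℝ E) (𝒜 : Set (ℕ → E)) : Prop :=
  ∃ σ : List E → Bool, ∀ x : ℕ → E, IsBlockSeq b x →
    {n | σ (List.ofFn fun i : Fin (n + 1) => x i) = true}.Infinite ∧
    ∀ φ : ℕ → ℕ, StrictMono φ →
      (∀ k, σ (List.ofFn fun i : Fin (φ k + 1) => x i) = true) →
      (∀ n, σ (List.ofFn fun i : Fin (n + 1) => x i) = true → ∃ k, φ k = n) →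
      (fun k => x (φ k)) ∈ 𝒜

end Stmt1

namespace Stmt1Aux

open Stmt1

variable {E : Type*} [AddCommGroup E] [Module ℝ E]

open Classical in
/-- The selected vectors (in reverse order) from a reversed history list. -/
noncomputable def selR (b : Module.Basis ℕ ℝ E) (σ : List E → ℕ) : List E → List E
  | [] => []
  | y :: r => if natLt b (σ (selR b σ r).reverse) y then y :: selR b σ r else selR b σ r

open Classical in
/-- The SG strategy for player I induced by the IAG strategy `σ`. -/
noncomputable def sgR (b : Module.Basis ℕ ℝ E) (σ : List E → ℕ) : List E → Bool
  | [] => false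
  | y :: r => if natLt b (σ (selR b σ r).reverse) y then true else false

noncomputable def sg (b : Module.Basis ℕ ℝ E) (σ : List E → ℕ) (l : List E) : Bool :=
  sgR b σ l.reverse

end Stmt1Aux

theorem stmt1 {E : Type*} [AddCommGroup E] [Module ℝ E] (b : Module.Basis ℕ ℝ E)
    (𝒜 : Set (ℕ → E)) (h : Stmt1.IWinsIAG b 𝒜) : Stmt1.IWinsSG b 𝒜 := by
  classical
  obtain ⟨σ, hσ⟩ := h
  refine ⟨Stmt1Aux.sg b σ, ?_⟩
  intro x hx
  -- the selected sublist among the first `n` vectors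
  set sel : ℕ → List E :=
    fun n => (Stmt1Aux.selR b σ (List.ofFn fun i : Fin n => x i).reverse).reverse with hseldef
  have hLrev : ∀ n : ℕ, (List.ofFn fun i : Fin (n + 1) => x i).reverse
      = x n :: (List.ofFn fun i : Fin n => x i).reverse := by
    intro n
    rw [List.ofFn_succ']
    simp [List.concat_eq_append]
  have hsel0 : sel 0 = [] := by simp [hseldef, Stmt1Aux.selR]
  have hdec : ∀ n : ℕ, (Stmt1Aux.sg b σ (List.ofFn fun i : Fin (n + 1) => x i) = true)
      ↔ Stmt1.natLt b (σ (sel n)) (x n) := by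
    intro n
    rw [Stmt1Aux.sg, hLrev n]
    by_cases hn : Stmt1.natLt b (σ (sel n)) (x n) <;>
      simp [Stmt1Aux.sgR, hseldef, hn]
  have hstep_pos : ∀ n : ℕ, Stmt1.natLt b (σ (sel n)) (x n) →
      sel (n + 1) = sel n ++ [x n] := by
    intro n hn
    show (Stmt1Aux.selR b σ (List.ofFn fun i : Fin (n + 1) => x i).reverse).reverse = _
    rw [hLrev n, Stmt1Aux.selR, if_pos hn, List.reverse_cons]
  have hstep_neg : ∀ n : ℕ, ¬ Stmt1.natLt b (σ (sel n)) (x n) →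
      sel (n + 1) = sel n := by
    intro n hn
    show (Stmt1Aux.selR b σ (List.ofFn fun i : Fin (n + 1) => x i).reverse).reverse = _
    rw [hLrev n, Stmt1Aux.selR, if_neg hn]
  -- supports are nonempty and move to the right
  have hsupp : ∀ n : ℕ, ((b.repr (x n)).support).Nonempty := by
    intro n
    exact Finsupp.support_nonempty_iff.2 fun h0 => hx.1 n (b.repr.map_eq_zero_iff.1 h0)
  have hgrow : ∀ n : ℕ, ∀ j ∈ (b.repr (x n)).support, n ≤ j := by
    intro n
    induction n with
    | zero => exact fun j _ => Nat.zero_le _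
    | succ n ih =>
      intro j hj
      obtain ⟨i, hi⟩ := hsupp n
      exact Nat.succ_le_of_lt (lt_of_le_of_lt (ih i hi) (hx.2 n i hi j hj))
  have hmk : ∀ m n : ℕ, m < n → Stmt1.natLt b m (x n) :=
    fun m n hmn i hi => lt_of_lt_of_le hmn (hgrow n i hi)
  have hblock : ∀ m n : ℕ, m < n → Stmt1.blockLt b (x m) (x n) := by
    intro m n hmn
    induction n with
    | zero => omega
    | succ n ih =>
      rcases Nat.lt_succ_iff_lt_or_eq.1 hmn with h' | h'
      · intro i hi j hj
        obtain ⟨k, hk⟩ := hsupp n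
        exact lt_trans (ih h' i hi k hk) (hx.2 n k hk j hj)
      · rw [h']; exact hx.2 n
  -- no selections on `[a, c)` means `sel` is constant there
  have hconst : ∀ a c : ℕ, a ≤ c →
      (∀ m, a ≤ m → m < c → ¬ Stmt1.natLt b (σ (sel m)) (x m)) → sel c = sel a := by
    intro a c hac
    induction c, hac using Nat.le_induction with
    | base => intro _; rfl
    | succ c hac ih =>
      intro hm
      rw [hstep_neg c (hm c hac (Nat.lt_succ_self c)),
        ih fun m h1 h2 => hm m h1 (Nat.lt_succ_of_lt h2)]
  -- there is a selection beyond any point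
  have hinf_aux : ∀ N : ℕ, ∃ n, N ≤ n ∧ Stmt1.natLt b (σ (sel n)) (x n) := by
    intro N
    by_contra hcon
    push_neg at hcon
    set n := max N (σ (sel N) + 1) with hn
    have h1 : N ≤ n := le_max_left _ _
    have h2 : sel n = sel N := hconst N n h1 fun m hm _ => hcon m hm
    refine hcon n h1 ?_
    rw [h2]
    exact hmk _ _ (lt_of_lt_of_le (Nat.lt_succ_self _) (le_max_right _ _))
  constructor
  · -- infinitely many selected indices
    by_contra hfin
    rw [Set.not_infinite] at hfin
    obtain ⟨a, ha⟩ := hfin.bddAbove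
    obtain ⟨n, hn1, hn2⟩ := hinf_aux (a + 1)
    have : n ≤ a := ha ((hdec n).2 hn2)
    omega
  · intro φ hφ hsel1 hsurj
    have hkey : ∀ k : ℕ, sel (φ k) = List.ofFn fun i : Fin k => x (φ i) := by
      intro k
      induction k with
      | zero =>
        have h0 : sel (φ 0) = sel 0 := by
          refine hconst 0 (φ 0) (Nat.zero_le _) fun m _ hm hnat => ?_
          obtain ⟨j, hj⟩ := hsurj m ((hdec m).2 hnat)
          have := hφ.monotone (Nat.zero_le j)
          omega
        rw [h0, hsel0]
        simp
      | succ k ih =>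
        have h1 : sel (φ k + 1) = sel (φ k) ++ [x (φ k)] :=
          hstep_pos _ ((hdec _).1 (hsel1 k))
        have h2 : sel (φ (k + 1)) = sel (φ k + 1) := by
          refine hconst (φ k + 1) (φ (k + 1)) (hφ (Nat.lt_succ_self k)) fun m hm1 hm2 hnat => ?_
          obtain ⟨j, hj⟩ := hsurj m ((hdec m).2 hnat)
          have hkj : k < j := by
            by_contra hc
            have := hφ.monotone (Nat.le_of_not_lt hc)
            omega
          have h3 : φ (k + 1) ≤ φ j := hφ.monotone hkj
          omega
        rw [h2, h1, ih, List.ofFn_succ']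
        simp [List.concat_eq_append]
    refine hσ (fun k => x (φ k))
      ⟨fun k => hx.1 _, fun k => hblock _ _ (hφ (Nat.lt_succ_self k))⟩ fun k => ?_
    have := (hdec (φ k)).1 (hsel1 k)
    rw [← hkey k] at *
    exact this
end

section
/- Let E be a vector space with basis (e_i) and 𝒜 a set of infinite block sequences. If T is a block tree with [T] ⊆ 𝒜, then player II has a winning strategy in the infinite asymptotic game (IAG) to make the outcome lie in 𝒜. -/
/-!
STATEMENT 2: If `T` is a block tree with `[T] ⊆ 𝒜`, then player II has a winning
strategy in the infinite asymptotic game (IAG) to make the outcome lie in `𝒜`.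
-/

namespace Stmt2

variable {E : Type*} [AddCommGroup E] [Module ℝ E]

def natLt (b : Module.Basis ℕ ℝ E) (n : ℕ) (x : E) : Prop :=
  ∀ i ∈ (b.repr x).support, n < i

def blockLt (b : Module.Basis ℕ ℝ E) (x y : E) : Prop :=
  ∀ i ∈ (b.repr x).support, ∀ j ∈ (b.repr y).support, i < j

def IsBlockSeq (b : Module.Basis ℕ ℝ E) (x : ℕ → E) : Prop :=
  (∀ n, x n ≠ 0) ∧ ∀ n, blockLt b (x n) (x (n + 1))

/-- A block tree: a nonempty tree of finite block sequences, closed under initial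
segments, such that the immediate successors of every node can be enumerated as
an infinite block sequence lying entirely beyond the node. -/
def IsBlockTree (b : Module.Basis ℕ ℝ E) (T : Set (List E)) : Prop :=
  T.Nonempty ∧ (∀ l ∈ T, ∀ n, l.take n ∈ T) ∧
  ∀ l ∈ T, ∃ y : ℕ → E, IsBlockSeq b y ∧ (∀ z ∈ l, blockLt b z (y 0)) ∧
    (∀ j, l ++ [y j] ∈ T) ∧ (∀ z, l ++ [z] ∈ T → ∃ j, z = y j)

/-- `x` is an infinite branch of `T`. -/
def IsBranch (T : Set (List E)) (x : ℕ → E) : Prop :=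
  ∀ n, (List.ofFn fun i : Fin n => x i) ∈ T

def iagPlay (τ : List ℕ → E) (n : ℕ → ℕ) (k : ℕ) : E :=
  τ (List.ofFn fun i : Fin (k + 1) => n i)

def IIWinsIAG (b : Module.Basis ℕ ℝ E) (𝒜 : Set (ℕ → E)) : Prop :=
  ∃ τ : List ℕ → E, ∀ n : ℕ → ℕ,
    IsBlockSeq b (iagPlay τ n) ∧ (∀ k, natLt b (n k) (iagPlay τ n k)) ∧
      iagPlay τ n ∈ 𝒜

section Aux

variable {E : Type*} [AddCommGroup E] [Module ℝ E]

open Stmt2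

lemma supp_nonempty (b : Module.Basis ℕ ℝ E) {v : E} (hv : v ≠ 0) :
    (b.repr v).support.Nonempty := by
  rw [Finsupp.support_nonempty_iff]
  simpa using hv

lemma blockLt_trans (b : Module.Basis ℕ ℝ E) {u v w : E} (hv : v ≠ 0)
    (h1 : blockLt b u v) (h2 : blockLt b v w) : blockLt b u w := by
  intro i hi j hj
  obtain ⟨m, hm⟩ := supp_nonempty b hv
  exact lt_trans (h1 i hi m hm) (h2 m hm j hj)

lemma blockSeq_blockLt (b : Module.Basis ℕ ℝ E) {y : ℕ → E} (h : IsBlockSeq b y) :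
    ∀ {j k : ℕ}, j < k → blockLt b (y j) (y k) := by
  intro j k hjk
  induction k with
  | zero => omega
  | succ k ih =>
    rcases Nat.lt_succ_iff_lt_or_eq.mp hjk with h' | h'
    · exact blockLt_trans b (h.1 k) (ih h') (h.2 k)
    · subst h'; exact h.2 j

lemma blockSeq_le_support (b : Module.Basis ℕ ℝ E) {y : ℕ → E} (h : IsBlockSeq b y) :
    ∀ j, ∀ i ∈ (b.repr (y j)).support, j ≤ i := by
  intro j
  induction j with
  | zero => intro i _; exact Nat.zero_le i
  | succ j ih =>
    intro i hi
    obtain ⟨m, hm⟩ := supp_nonempty b (h.1 j)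
    have := h.2 j m hm i hi
    have := ih m hm
    omega

open Classical in
/-- The vector II picks when the current node is `l` and I just played `n`. -/
noncomputable def pick (b : Module.Basis ℕ ℝ E) (T : Set (List E)) (l : List E) (n : ℕ) : E :=
  if h : ∃ y : ℕ → E, IsBlockSeq b y ∧ (∀ z ∈ l, blockLt b z (y 0)) ∧
      (∀ j, l ++ [y j] ∈ T) ∧ (∀ z, l ++ [z] ∈ T → ∃ j, z = y j)
  then h.choose (n + 1) else 0

lemma pick_eq (b : Module.Basis ℕ ℝ E) (T : Set (List E)) (l : List E) (n : ℕ)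
    (h : ∃ y : ℕ → E, IsBlockSeq b y ∧ (∀ z ∈ l, blockLt b z (y 0)) ∧
      (∀ j, l ++ [y j] ∈ T) ∧ (∀ z, l ++ [z] ∈ T → ∃ j, z = y j)) :
    pick b T l n = h.choose (n + 1) := by
  unfold pick
  rw [dif_pos h]

/-- The node built so far, reversed; input is the reversed list of I's moves. -/
noncomputable def nodeRev (b : Module.Basis ℕ ℝ E) (T : Set (List E)) : List ℕ → List E
  | [] => []
  | n :: l => pick b T (nodeRev b T l).reverse n :: nodeRev b T l

end Aux

end Stmt2

theorem stmt2 {E : Type*} [AddCommGroup E] [Module ℝ E] (b : Module.Basis ℕ ℝ E)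
    (𝒜 : Set (ℕ → E)) (T : Set (List E)) (hT : Stmt2.IsBlockTree b T)
    (hTA : ∀ x : ℕ → E, Stmt2.IsBranch T x → x ∈ 𝒜) :
    Stmt2.IIWinsIAG b 𝒜 := by
  classical
  refine ⟨fun l => (Stmt2.nodeRev b T l.reverse).headD 0, fun n => ?_⟩
  set τ : List ℕ → E := fun l => (Stmt2.nodeRev b T l.reverse).headD 0 with hτ
  -- the node after k moves
  set node : ℕ → List E :=
    fun k => (Stmt2.nodeRev b T (List.ofFn fun i : Fin k => n i).reverse).reverse with hnode
  have hrev : ∀ k, (List.ofFn fun i : Fin (k + 1) => n i).reverse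
      = n k :: (List.ofFn fun i : Fin k => n i).reverse := by
    intro k
    rw [List.ofFn_succ' (fun i : Fin (k + 1) => n i)]
    simp [List.concat_eq_append]
  have hstep : ∀ k, node (k + 1) = node k ++ [Stmt2.pick b T (node k) (n k)] := by
    intro k
    simp only [hnode, hrev, Stmt2.nodeRev, List.reverse_cons]
  have hplay : ∀ k, Stmt2.iagPlay τ n k = Stmt2.pick b T (node k) (n k) := by
    intro k
    simp only [Stmt2.iagPlay, hτ, hrev, Stmt2.nodeRev, List.headD_cons, hnode]
  have hnode0 : node 0 = [] := by simp [hnode, Stmt2.nodeRev]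
  -- the key invariant
  have hmem : ∀ k, node k ∈ T ∧ node k = List.ofFn fun i : Fin k => Stmt2.iagPlay τ n i := by
    intro k
    induction k with
    | zero =>
      obtain ⟨l, hl⟩ := hT.1
      have := hT.2.1 l hl 0
      simpa [hnode0] using this
    | succ k ih =>
      have hx := hT.2.2 (node k) ih.1
      have hpk : Stmt2.pick b T (node k) (n k) = hx.choose (n k + 1) :=
        Stmt2.pick_eq b T (node k) (n k) hx
      have hstep' : node (k + 1) = node k ++ [Stmt2.iagPlay τ n k] := by
        rw [hstep k, hplay k]
      constructor
      · rw [hstep k, hpk]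
        exact hx.choose_spec.2.2.1 (n k + 1)
      · rw [hstep', ih.2, List.ofFn_succ' (fun i : Fin (k + 1) => Stmt2.iagPlay τ n i),
          List.concat_eq_append]
        simp
  -- properties of each picked vector
  have hprop : ∀ k, Stmt2.iagPlay τ n k ≠ 0 ∧ Stmt2.natLt b (n k) (Stmt2.iagPlay τ n k) ∧
      ∀ z ∈ node k, Stmt2.blockLt b z (Stmt2.iagPlay τ n k) := by
    intro k
    have hx := hT.2.2 (node k) (hmem k).1
    have hpk : Stmt2.iagPlay τ n k = hx.choose (n k + 1) := by
      rw [hplay k]; exact Stmt2.pick_eq b T (node k) (n k) hx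
    obtain ⟨hbs, hbeyond, _, _⟩ := hx.choose_spec
    refine ⟨by rw [hpk]; exact hbs.1 _, ?_, ?_⟩
    · intro i hi
      rw [hpk] at hi
      have := Stmt2.blockSeq_le_support b hbs (n k + 1) i hi
      omega
    · intro z hz
      rw [hpk]
      exact Stmt2.blockLt_trans b (hbs.1 0) (hbeyond z hz)
        (Stmt2.blockSeq_blockLt b hbs (Nat.succ_pos _))
  refine ⟨⟨fun k => (hprop k).1, fun k => ?_⟩, fun k => (hprop k).2.1, ?_⟩
  · -- consecutive blockLt
    refine (hprop (k + 1)).2.2 _ ?_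
    rw [hstep k, ← hplay k]
    simp
  · -- the outcome is a branch of T, hence in 𝒜
    refine hTA _ fun m => ?_
    rw [← (hmem m).2]
    exact (hmem m).1
end

section
/- Let E be a vector space with basis (e_i) and 𝒜 a set of infinite block sequences. If player II has a winning strategy in the infinite asymptotic game (IAG) to make the outcome lie in 𝒜, then there exists a block tree T all of whose infinite branches lie in 𝒜. -/
/-!
STATEMENT 3: If player II has a winning strategy in the infinite asymptotic game
(IAG) to make the outcome lie in `𝒜`, then there exists a block tree `T` all of
whose infinite branches lie in `𝒜`.
-/

namespace Stmt3

variable {E : Type*} [AddCommGroup E] [Module ℝ E]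

def natLt (b : Module.Basis ℕ ℝ E) (n : ℕ) (x : E) : Prop :=
  ∀ i ∈ (b.repr x).support, n < i

def blockLt (b : Module.Basis ℕ ℝ E) (x y : E) : Prop :=
  ∀ i ∈ (b.repr x).support, ∀ j ∈ (b.repr y).support, i < j

def IsBlockSeq (b : Module.Basis ℕ ℝ E) (x : ℕ → E) : Prop :=
  (∀ n, x n ≠ 0) ∧ ∀ n, blockLt b (x n) (x (n + 1))

def IsBlockTree (b : Module.Basis ℕ ℝ E) (T : Set (List E)) : Prop :=
  T.Nonempty ∧ (∀ l ∈ T, ∀ n, l.take n ∈ T) ∧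
  ∀ l ∈ T, ∃ y : ℕ → E, IsBlockSeq b y ∧ (∀ z ∈ l, blockLt b z (y 0)) ∧
    (∀ j, l ++ [y j] ∈ T) ∧ (∀ z, l ++ [z] ∈ T → ∃ j, z = y j)

def IsBranch (T : Set (List E)) (x : ℕ → E) : Prop :=
  ∀ n, (List.ofFn fun i : Fin n => x i) ∈ T

def iagPlay (τ : List ℕ → E) (n : ℕ → ℕ) (k : ℕ) : E :=
  τ (List.ofFn fun i : Fin (k + 1) => n i)

def IIWinsIAG (b : Module.Basis ℕ ℝ E) (𝒜 : Set (ℕ → E)) : Prop :=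
  ∃ τ : List ℕ → E, ∀ n : ℕ → ℕ,
    IsBlockSeq b (iagPlay τ n) ∧ (∀ k, natLt b (n k) (iagPlay τ n k)) ∧
      iagPlay τ n ∈ 𝒜

end Stmt3

namespace Stmt3Proof

open Stmt3

variable {E : Type*} [AddCommGroup E] [Module ℝ E]

/-- The maximum of the support of a vector (0 if the support is empty). -/
noncomputable def msup (b : Module.Basis ℕ ℝ E) (x : E) : ℕ := (b.repr x).support.sup id

lemma le_msup {b : Module.Basis ℕ ℝ E} {x : E} {i : ℕ} (hi : i ∈ (b.repr x).support) :
    i ≤ msup b x := Finset.le_sup (f := id) hi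

lemma supp_nonempty {b : Module.Basis ℕ ℝ E} {x : E} (hx : x ≠ 0) :
    ((b.repr x).support).Nonempty := by
  rw [Finsupp.support_nonempty_iff]
  exact fun h0 => hx (b.repr.map_eq_zero_iff.mp h0)

lemma blockLt_of_natLt {b : Module.Basis ℕ ℝ E} {m : ℕ} {x y : E} (h : natLt b m y)
    (hx : msup b x ≤ m) : blockLt b x y :=
  fun i hi j hj => lt_of_le_of_lt (le_trans (le_msup hi) hx) (h j hj)

lemma msup_lt_of_natLt {b : Module.Basis ℕ ℝ E} {m : ℕ} {y : E} (h : natLt b m y)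
    (hy : y ≠ 0) : m < msup b y := by
  obtain ⟨j, hj⟩ := supp_nonempty hy
  exact lt_of_lt_of_le (h j hj) (le_msup hj)

lemma msup_le_of_blockLt {b : Module.Basis ℕ ℝ E} {x y : E} (h : blockLt b x y)
    (hy : y ≠ 0) : msup b x ≤ msup b y := by
  obtain ⟨j, hj⟩ := supp_nonempty hy
  exact Finset.sup_le fun i hi => le_trans (le_of_lt (h i hi j hj)) (le_msup hj)

/-- The part of the winning-strategy property we mostly use. -/
def Good (b : Module.Basis ℕ ℝ E) (τ : List ℕ → E) : Prop :=
  ∀ n : ℕ → ℕ, IsBlockSeq b (iagPlay τ n) ∧ ∀ k, natLt b (n k) (iagPlay τ n k)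

lemma ofFn_getD (s : List ℕ) (k : ℕ) (hk : k < s.length) :
    (List.ofFn fun i : Fin (k + 1) => s.getD i 0) = s.take (k + 1) := by
  apply List.ext_getElem
  · simp; omega
  · intro i h1 h2
    have hi : i < k + 1 := by simpa using h1
    have his : i < s.length := by omega
    rw [List.getElem_ofFn, List.getElem_take]
    exact List.getD_eq_getElem s 0 his

lemma iag_take {τ : List ℕ → E} (s : List ℕ) (k : ℕ) (hk : k < s.length) :
    iagPlay τ (fun i => s.getD i 0) k = τ (s.take (k + 1)) := by
  unfold iagPlay
  rw [ofFn_getD s k hk]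

variable {b : Module.Basis ℕ ℝ E} {τ : List ℕ → E}

lemma tau_ne_zero (hτ : Good b τ) (s : List ℕ) (hs : s ≠ []) : τ s ≠ 0 := by
  have hlen : 0 < s.length := List.length_pos_iff.mpr hs
  have h := (hτ fun i => s.getD i 0).1.1 (s.length - 1)
  have e : s.length - 1 + 1 = s.length := by omega
  rwa [iag_take s _ (by omega), e, List.take_length] at h

lemma natLt_tau (hτ : Good b τ) (s : List ℕ) (m : ℕ) : natLt b m (τ (s ++ [m])) := by
  have hlen : (s ++ [m]).length = s.length + 1 := by simp
  have h := (hτ fun i => (s ++ [m]).getD i 0).2 s.length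
  rw [iag_take (s ++ [m]) s.length (by omega)] at h
  have e1 : (s ++ [m]).take (s.length + 1) = s ++ [m] := by
    rw [← hlen, List.take_length]
  have e2 : (s ++ [m]).getD s.length 0 = m := by
    rw [List.getD_eq_getElem _ 0 (by omega)]
    simp
  rwa [e1, e2] at h

lemma blockLt_tau (hτ : Good b τ) (s : List ℕ) (hs : s ≠ []) (m : ℕ) :
    blockLt b (τ s) (τ (s ++ [m])) := by
  have hlen : (s ++ [m]).length = s.length + 1 := by simp
  have hs' : 0 < s.length := List.length_pos_iff.mpr hs
  have h := (hτ fun i => (s ++ [m]).getD i 0).1.2 (s.length - 1)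
  have e0 : s.length - 1 + 1 = s.length := by omega
  rw [e0] at h
  rw [iag_take (s ++ [m]) (s.length - 1) (by omega),
      iag_take (s ++ [m]) s.length (by omega), e0] at h
  have e1 : (s ++ [m]).take s.length = s := by
    rw [List.take_append_of_le_length le_rfl, List.take_length]
  have e2 : (s ++ [m]).take (s.length + 1) = s ++ [m] := by
    rw [← hlen, List.take_length]
  rwa [e1, e2] at h

/-- The chosen moves of player I below a given position. -/
noncomputable def M (b : Module.Basis ℕ ℝ E) (τ : List ℕ → E) (s : List ℕ) : ℕ → ℕ
  | 0 => msup b (τ s)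
  | j + 1 => msup b (τ (s ++ [M b τ s j]))

/-- The children vectors below a given position. -/
noncomputable def chld (b : Module.Basis ℕ ℝ E) (τ : List ℕ → E) (s : List ℕ) (j : ℕ) : E :=
  τ (s ++ [M b τ s j])

lemma M_succ_eq (s : List ℕ) (j : ℕ) : M b τ s (j + 1) = msup b (chld b τ s j) := rfl

lemma chld_ne_zero (hτ : Good b τ) (s : List ℕ) (j : ℕ) : chld b τ s j ≠ 0 :=
  tau_ne_zero hτ _ (by simp [])

lemma natLt_chld (hτ : Good b τ) (s : List ℕ) (j : ℕ) :
    natLt b (M b τ s j) (chld b τ s j) := natLt_tau hτ s _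

lemma M_strictMono (hτ : Good b τ) (s : List ℕ) : StrictMono (M b τ s) := by
  apply strictMono_nat_of_lt_succ
  intro j
  rw [M_succ_eq]
  exact msup_lt_of_natLt (natLt_chld hτ s j) (chld_ne_zero hτ s j)

lemma blockLt_chld (hτ : Good b τ) (s : List ℕ) (j : ℕ) :
    blockLt b (chld b τ s j) (chld b τ s (j + 1)) := by
  apply blockLt_of_natLt (natLt_chld hτ s (j + 1))
  rw [M_succ_eq]

lemma chld_inj (hτ : Good b τ) {s : List ℕ} {j j' : ℕ}
    (h : chld b τ s j = chld b τ s j') : j = j' := by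
  rcases lt_trichotomy j j' with hlt | he | hlt
  · obtain ⟨i, hi⟩ := supp_nonempty (chld_ne_zero hτ s j)
    have h1 : i ≤ M b τ s (j + 1) := by rw [M_succ_eq]; exact le_msup hi
    have h2 : M b τ s (j + 1) ≤ M b τ s j' := (M_strictMono hτ s).monotone (by omega)
    have h3 : M b τ s j' < i := natLt_chld hτ s j' i (h ▸ hi)
    omega
  · exact he
  · obtain ⟨i, hi⟩ := supp_nonempty (chld_ne_zero hτ s j')
    have h1 : i ≤ M b τ s (j' + 1) := by rw [M_succ_eq]; exact le_msup hi
    have h2 : M b τ s (j' + 1) ≤ M b τ s j := (M_strictMono hτ s).monotone (by omega)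
    have h3 : M b τ s j < i := natLt_chld hτ s j i (h ▸ hi)
    omega

lemma msup_take_le (hτ : Good b τ) (s : List ℕ) (i : ℕ) (hi : i < s.length) :
    msup b (τ (s.take (i + 1))) ≤ msup b (τ s) := by
  have key : ∀ k, k ≤ s.length → i + 1 ≤ k →
      msup b (τ (s.take (i + 1))) ≤ msup b (τ (s.take k)) := by
    intro k
    induction k with
    | zero => omega
    | succ k ih =>
      intro hk1 hk2
      rcases Nat.lt_or_ge i k with hik | hik
      · have hkk : k < s.length := by omega
        have e : s.take k ++ [s[k]'hkk] = s.take (k + 1) := by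
          simpa using List.take_concat_get s k hkk
        have hne : s.take k ≠ [] := by
          apply List.ne_nil_of_length_pos
          simp; omega
        have hb := blockLt_tau hτ (s.take k) hne (s[k]'hkk)
        rw [e] at hb
        have hnz : τ (s.take (k + 1)) ≠ 0 := by
          apply tau_ne_zero hτ
          apply List.ne_nil_of_length_pos
          simp; omega
        exact le_trans (ih (by omega) (by omega)) (msup_le_of_blockLt hb hnz)
      · have : k = i := by omega
        subst this
        exact le_rfl
  have h := key s.length le_rfl (by omega)
  rwa [List.take_length] at h

/-- The tree of positions (finite sequences of moves of player I). -/
def S (b : Module.Basis ℕ ℝ E) (τ : List ℕ → E) : Set (List ℕ) :=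
  { s | ∀ k, (hk : k < s.length) → ∃ j, s[k]'hk = M b τ (s.take k) j }

/-- The vectors played by the strategy along a position. -/
def phi (τ : List ℕ → E) (s : List ℕ) : List E :=
  List.ofFn fun i : Fin s.length => τ (s.take ((i : ℕ) + 1))

lemma phi_length (s : List ℕ) : (phi τ s).length = s.length := by simp [phi]

lemma phi_getElem (s : List ℕ) (i : ℕ) (hi : i < s.length) :
    (phi τ s)[i]'(by rw [phi_length]; exact hi) = τ (s.take (i + 1)) := by
  simp [phi]

lemma phi_nil : phi τ ([] : List ℕ) = [] := by simp [phi]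

lemma phi_take (s : List ℕ) (n : ℕ) : phi τ (s.take n) = (phi τ s).take n := by
  apply List.ext_getElem
  · simp [phi]
  · intro i h1 h2
    have h1' : i < (s.take n).length := by simpa [phi_length] using h1
    have hin : i < n := by simp at h1'; omega
    have his : i < s.length := by simp at h1'; omega
    rw [List.getElem_take, phi_getElem s i his, phi_getElem (s.take n) i h1',
        List.take_take]
    congr 2
    omega

lemma phi_concat (s : List ℕ) (m : ℕ) :
    phi τ (s ++ [m]) = phi τ s ++ [τ (s ++ [m])] := by
  apply List.ext_getElem
  · simp [phi]
  · intro i h1 h2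
    have hi : i < s.length + 1 := by simpa [phi_length] using h1
    rcases Nat.lt_or_ge i s.length with h | h
    · have e : (s ++ [m]).take (i + 1) = s.take (i + 1) :=
        List.take_append_of_le_length (by omega)
      rw [phi_getElem (s ++ [m]) i (by simp; omega), e,
          List.getElem_append_left (by rwa [phi_length]), phi_getElem s i h]
    · have hieq : i = s.length := by omega
      subst hieq
      rw [phi_getElem (s ++ [m]) s.length (by simp)]
      have e : (s ++ [m]).take (s.length + 1) = s ++ [m] := by
        have : (s ++ [m]).length = s.length + 1 := by simp
        rw [← this, List.take_length]
      rw [e, List.getElem_append_right (by rw [phi_length])]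
      simp [phi_length]

lemma S_take {s : List ℕ} (hs : s ∈ S b τ) (n : ℕ) : s.take n ∈ S b τ := by
  intro k hk
  have hk' : k < s.length := by simp at hk; omega
  have hkn : k < n := by simp at hk; omega
  obtain ⟨j, hj⟩ := hs k hk'
  refine ⟨j, ?_⟩
  rw [List.getElem_take, List.take_take]
  have : min k n = k := by omega
  rw [this]
  exact hj

lemma S_nil : ([] : List ℕ) ∈ S b τ := by
  intro k hk
  simp at hk

lemma take_concat_of_length {α : Type*} (s : List α) (n : ℕ) (h : s.length = n + 1) :
    s.take n ++ [s[n]'(by omega)] = s := by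
  have := List.take_concat_get (l := s) (by omega : n < s.length)
  simp only [List.concat_eq_append] at this
  rw [this, ← h, List.take_length]

lemma phi_inj (hτ : Good b τ) :
    ∀ N (s t : List ℕ), s.length = N → s ∈ S b τ → t ∈ S b τ →
      phi τ s = phi τ t → s = t := by
  intro N
  induction N with
  | zero =>
    intro s t hs _ _ hphi
    have hlt : t.length = 0 := by
      have := congrArg List.length hphi
      simp only [phi_length] at this
      omega
    rw [List.length_eq_zero_iff.mp hs, List.length_eq_zero_iff.mp hlt]
  | succ N ih =>
    intro s t hlen hs ht hphi
    have hlt : t.length = N + 1 := by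
      have := congrArg List.length hphi
      simp only [phi_length] at this
      omega
    have hpref : phi τ (s.take N) = phi τ (t.take N) := by
      rw [phi_take, phi_take, hphi]
    have heq : s.take N = t.take N :=
      ih _ _ (by simp [hlen]) (S_take hs N) (S_take ht N) hpref
    obtain ⟨j, hj⟩ := hs N (by omega)
    obtain ⟨j', hj'⟩ := ht N (by omega)
    have hsdec : s.take N ++ [s[N]'(by omega)] = s := take_concat_of_length s N hlen
    have htdec : t.take N ++ [t[N]'(by omega)] = t := take_concat_of_length t N hlt
    have hlast : τ s = τ t := by
      have h1 : (phi τ s)[N]'(by rw [phi_length]; omega)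
          = (phi τ t)[N]'(by rw [phi_length]; omega) := by
        congr 1
      rw [phi_getElem s N (by omega), phi_getElem t N (by omega)] at h1
      have es : s.take (N + 1) = s := by rw [← hlen, List.take_length]
      have et : t.take (N + 1) = t := by rw [← hlt, List.take_length]
      rwa [es, et] at h1
    have hch : chld b τ (s.take N) j = chld b τ (s.take N) j' := by
      unfold chld
      rw [← hj, hsdec, heq, ← hj', htdec]
      exact hlast
    have hjj := chld_inj hτ hch
    calc s = s.take N ++ [s[N]'(by omega)] := hsdec.symm
      _ = t.take N ++ [t[N]'(by omega)] := by rw [hj, hj', heq, hjj]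
      _ = t := htdec

theorem main (b : Module.Basis ℕ ℝ E) (𝒜 : Set (ℕ → E)) (h : IIWinsIAG b 𝒜) :
    ∃ T : Set (List E), IsBlockTree b T ∧ ∀ x : ℕ → E, IsBranch T x → x ∈ 𝒜 := by
  obtain ⟨τ, hτfull⟩ := h
  have hτ : Good b τ := fun n => ⟨(hτfull n).1, (hτfull n).2.1⟩
  refine ⟨phi τ '' S b τ, ⟨⟨[], ⟨[], S_nil, phi_nil⟩⟩, ?_, ?_⟩, ?_⟩
  · -- closed under take
    rintro l ⟨s, hsS, rfl⟩ n
    exact ⟨s.take n, S_take hsS n, phi_take s n⟩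
  · -- successors
    rintro l ⟨s, hsS, rfl⟩
    refine ⟨chld b τ s, ⟨chld_ne_zero hτ s, blockLt_chld hτ s⟩, ?_, ?_, ?_⟩
    · -- everything in l is before chld s 0
      intro z hz
      rw [phi, List.mem_ofFn] at hz
      obtain ⟨i, rfl⟩ := hz
      apply blockLt_of_natLt (natLt_chld hτ s 0)
      exact msup_take_le hτ s i i.isLt
    · -- each child gives a node
      intro j
      refine ⟨s ++ [M b τ s j], ?_, phi_concat s (M b τ s j)⟩
      intro k hk
      have hk' : k < s.length + 1 := by simpa using hk
      rcases Nat.lt_or_ge k s.length with hlt | hge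
      · obtain ⟨j', hj'⟩ := hsS k hlt
        refine ⟨j', ?_⟩
        rw [List.getElem_append_left hlt, List.take_append_of_le_length (le_of_lt hlt)]
        exact hj'
      · have : k = s.length := by omega
        subst this
        refine ⟨j, ?_⟩
        rw [List.take_append_of_le_length le_rfl, List.take_length]
        simp
    · -- every child node comes from chld
      rintro z ⟨t, htS, hphi⟩
      have hlt : t.length = s.length + 1 := by
        have := congrArg List.length hphi
        simp only [phi_length, List.length_append, List.length_cons,
          List.length_nil] at this
        omega
      have hpref : phi τ (t.take s.length) = phi τ s := by
        rw [phi_take, hphi, List.take_append_of_le_length (by rw [phi_length])]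
        exact List.take_of_length_le (le_of_eq (phi_length s))
      have heq : t.take s.length = s :=
        phi_inj hτ s.length _ _ (by simp; omega) (S_take htS s.length) hsS hpref
      obtain ⟨j, hj⟩ := htS s.length (by omega)
      rw [heq] at hj
      have htdec : t.take s.length ++ [t[s.length]'(by omega)] = t :=
        take_concat_of_length t s.length hlt
      have ht2 : t = s ++ [M b τ s j] := by rw [← htdec, heq, hj]
      refine ⟨j, ?_⟩
      have : phi τ s ++ [z] = phi τ s ++ [chld b τ s j] := by
        rw [← hphi, ht2, phi_concat]
        rfl
      simpa using this
  · -- branches are in 𝒜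
    intro x hx
    choose s hsS hphi using hx
    have hslen : ∀ n, (s n).length = n := by
      intro n
      have := congrArg List.length (hphi n)
      simpa [phi_length] using this
    have hofn : ∀ n, (List.ofFn fun i : Fin (n + 1) => x i).take n
        = List.ofFn fun i : Fin n => x i := by
      intro n
      apply List.ext_getElem
      · simp
      · intro i h1 h2
        have hi : i < n := by simpa using h2
        rw [List.getElem_take, List.getElem_ofFn, List.getElem_ofFn]
    have hstep : ∀ n, (s (n + 1)).take n = s n := by
      intro n
      apply phi_inj hτ n _ _ (by simp [hslen]) (S_take (hsS (n + 1)) n) (hsS n)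
      rw [phi_take, hphi, hphi, hofn]
    have htake : ∀ k m, k + 1 ≤ m → (s m).take (k + 1) = s (k + 1) := by
      intro k m
      induction m with
      | zero => omega
      | succ m ih =>
        intro hm
        rcases Nat.lt_or_ge (k + 1) (m + 1) with hlt | hge
        · have h1 : (s (m + 1)).take (k + 1) = ((s (m + 1)).take m).take (k + 1) := by
            rw [List.take_take]
            congr 1
            omega
          rw [h1, hstep m]
          exact ih (by omega)
        · have hk : k + 1 = m + 1 := by omega
          rw [hk]
          exact List.take_of_length_le (le_of_eq (hslen (m + 1)))
    set N : ℕ → ℕ := fun k => (s (k + 1)).getD k 0 with hN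
    have hofN : ∀ k, (List.ofFn fun i : Fin (k + 1) => N i) = s (k + 1) := by
      intro k
      apply List.ext_getElem
      · simp [hslen]
      · intro i h1 h2
        have hi : i < k + 1 := by simpa using h1
        rw [List.getElem_ofFn]
        simp only [hN]
        rw [List.getD_eq_getElem _ 0 (by rw [hslen]; omega)]
        have e : (s (k + 1)).take (i + 1) = s (i + 1) := htake i (k + 1) (by omega)
        have hidx : i < ((s (k + 1)).take (i + 1)).length := by
          simp [hslen]; omega
        calc (s (i + 1))[i]'(by rw [hslen]; omega)
            = ((s (k + 1)).take (i + 1))[i]'hidx := (List.getElem_of_eq e hidx).symm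
          _ = (s (k + 1))[i]'h2 := by simp
    have hxN : x = iagPlay τ N := by
      funext k
      have hk1 : k < (phi τ (s (k + 1))).length := by rw [phi_length, hslen]; omega
      have h1 : (phi τ (s (k + 1)))[k]'hk1 = x k := by
        have h2 := List.getElem_of_eq (hphi (k + 1)) hk1
        rw [h2, List.getElem_ofFn]
      rw [← h1, phi_getElem _ k (by rw [hslen]; omega)]
      have e : (s (k + 1)).take (k + 1) = s (k + 1) :=
        List.take_of_length_le (le_of_eq (hslen (k + 1)))
      rw [e]
      unfold iagPlay
      rw [hofN k]
    rw [hxN]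
    exact (hτfull N).2.2

end Stmt3Proof

theorem stmt3 {E : Type*} [AddCommGroup E] [Module ℝ E] (b : Module.Basis ℕ ℝ E)
    (𝒜 : Set (ℕ → E)) (h : Stmt3.IIWinsIAG b 𝒜) :
    ∃ T : Set (List E), Stmt3.IsBlockTree b T ∧
      ∀ x : ℕ → E, Stmt3.IsBranch T x → x ∈ 𝒜 := by
  exact Stmt3Proof.main b 𝒜 h
end

section
/- In the ℓ_1 ⊕ ℓ_2 example, player I does not have a winning strategy in the 0'th subsequence game (SG)_0 to choose, from every normalized block sequence played by II, a subsequence equivalent to the unit vector basis of ℓ_1 or equivalent to the unit vector basis of ℓ_2. More precisely: for any strategy of I in (SG)_0, player II can play so that the selected subsequence contains infinitely many terms from S_{ℓ_1} and infinitely many terms from S_{ℓ_2}, and such a sequence is equivalent to neither the ℓ_1 nor the ℓ_2 unit vector basis. -/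
open ENNReal

/-!
STATEMENT 14: In `E = ℓ₁ ⊕ ℓ₂`, player I has no winning strategy in the 0'th
subsequence game `(SG)₀` to select, from every normalized block sequence played
by II, a subsequence equivalent to the unit vector basis of `ℓ₁` or of `ℓ₂`.
Precisely: against any strategy of I in `(SG)₀` (coherent: once I commits to a
digit `0`/`1` at a coordinate she cannot change it; deciding every coordinate;
always selecting an infinite set), II can play a normalized block sequence such
that the selected subsequence contains infinitely many terms of `S_{ℓ₁}` and
infinitely many terms of `S_{ℓ₂}`; and any normalized block sequence containing
infinitely many terms of `S_{ℓ₁}` and infinitely many of `S_{ℓ₂}` is equivalent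
to neither the `ℓ₁` nor the `ℓ₂` unit vector basis.
-/

namespace Stmt14

noncomputable abbrev X := lp (fun _ : ℕ => ℝ) 1
noncomputable abbrev Y := lp (fun _ : ℕ => ℝ) 2
noncomputable abbrev E12 := WithLp 1 (X × Y)

noncomputable def part1 (x : E12) : X := ((WithLp.equiv 1 (X × Y)) x).1
noncomputable def part2 (x : E12) : Y := ((WithLp.equiv 1 (X × Y)) x).2

noncomputable def coordE (x : E12) (i : ℕ) : ℝ :=
  if i % 2 = 1 then part1 x (i / 2) else part2 x (i / 2)

def NormBlockSeq (x : ℕ → E12) : Prop :=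
  (∀ n, ‖x n‖ = 1) ∧
  ∃ N : ℕ → ℕ, Monotone N ∧
    ∀ n i, coordE (x n) i ≠ 0 → N n ≤ i ∧ i < N (n + 1)

/-- The history of II's first `n` moves. -/
def hist (x : ℕ → E12) (n : ℕ) : List E12 := List.ofFn fun i : Fin n => x i

/-- Equivalence of basic sequences lying in possibly different spaces. -/
def SeqEquiv {F G : Type*} [NormedAddCommGroup F] [NormedSpace ℝ F]
    [NormedAddCommGroup G] [NormedSpace ℝ G] (x : ℕ → F) (y : ℕ → G) : Prop :=
  ∃ C : ℝ, 0 < C ∧ ∀ (s : Finset ℕ) (a : ℕ → ℝ),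
    ‖∑ i ∈ s, a i • x i‖ ≤ C * ‖∑ i ∈ s, a i • y i‖ ∧
    ‖∑ i ∈ s, a i • y i‖ ≤ C * ‖∑ i ∈ s, a i • x i‖

end Stmt14


namespace Stmt14

lemma norm_eq (x : E12) : ‖x‖ = ‖part1 x‖ + ‖part2 x‖ := by
  rw [WithLp.prod_norm_eq_add (by norm_num)]
  simp [part1, part2]

noncomputable def mk12 (a : X) (b : Y) : E12 := (WithLp.equiv 1 (X × Y)).symm (a, b)
@[simp] lemma part1_mk (a b) : part1 (mk12 a b) = a := rfl
@[simp] lemma part2_mk (a b) : part2 (mk12 a b) = b := rfl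

noncomputable def uu (n : ℕ) : E12 := mk12 (lp.single 1 n (1:ℝ)) 0
noncomputable def vv (n : ℕ) : E12 := mk12 0 (lp.single 2 n (1:ℝ))
noncomputable def TT (b : Bool) (n : ℕ) : E12 := if b then uu n else vv n

lemma norm_single_one {p : ℝ≥0∞} [Fact (1 ≤ p)] (hp : 0 < p.toReal) (n : ℕ) :
    ‖(lp.single p n (1:ℝ) : lp (fun _ : ℕ => ℝ) p)‖ = 1 := by
  have := lp.norm_single (E := fun _ : ℕ => ℝ) (ENNReal.toReal_pos_iff.mp hp).1 n (1:ℝ)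
  simpa using this

lemma norm_uu (n : ℕ) : ‖uu n‖ = 1 := by
  rw [norm_eq]; simp [uu, norm_single_one (p := 1) (by norm_num)]
lemma norm_vv (n : ℕ) : ‖vv n‖ = 1 := by
  rw [norm_eq]
  simp [vv, norm_single_one (p := 2) (by norm_num)]

@[simp] lemma part1_uu_norm (n : ℕ) : ‖part1 (uu n)‖ = 1 := by
  simp [uu, norm_single_one (p := 1) (by norm_num)]
@[simp] lemma part1_vv_norm (n : ℕ) : ‖part1 (vv n)‖ = 0 := by
  simp [vv]

lemma single_coe {p : ℝ≥0∞} [Fact (1 ≤ p)] (n j : ℕ) :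
    (lp.single p n (1:ℝ) : lp (fun _ : ℕ => ℝ) p) j = if j = n then 1 else 0 := by
  rw [lp.single_apply]
  split <;> simp_all

lemma coordE_uu (n i : ℕ) : coordE (uu n) i ≠ 0 → i = 2 * n + 1 := by
  intro h
  simp only [coordE, uu, part1_mk, part2_mk] at h
  by_cases hp : i % 2 = 1
  · rw [if_pos hp, single_coe] at h
    have : i / 2 = n := by by_contra hc; simp [hc] at h
    omega
  · rw [if_neg hp] at h
    simp at h

lemma coordE_vv (n i : ℕ) : coordE (vv n) i ≠ 0 → i = 2 * n := by
  intro h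
  simp only [coordE, vv, part1_mk, part2_mk] at h
  by_cases hp : i % 2 = 1
  · rw [if_pos hp] at h
    simp at h
  · rw [if_neg hp, single_coe] at h
    have : i / 2 = n := by by_contra hc; simp [hc] at h
    omega

lemma nbs (c : ℕ → Bool) : NormBlockSeq (fun n => TT (c n) n) := by
  constructor
  · intro n; cases h : c n <;> simp [TT, h, norm_uu, norm_vv]
  · refine ⟨fun n => 2 * n, fun a b hab => by dsimp; omega, fun n i h => ?_⟩
    dsimp only at h ⊢
    cases hc : c n <;> simp only [TT, hc, if_true, if_false, Bool.false_eq_true] at h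
    · have := coordE_vv n i h; omega
    · have := coordE_uu n i h; omega



@[simp] lemma part1_add (x y : E12) : part1 (x + y) = part1 x + part1 y := rfl
@[simp] lemma part2_add (x y : E12) : part2 (x + y) = part2 x + part2 y := rfl
@[simp] lemma part1_zero : part1 (0 : E12) = 0 := rfl
@[simp] lemma part2_zero : part2 (0 : E12) = 0 := rfl

lemma part1_sum (s : Finset ℕ) (z : ℕ → E12) :
    part1 (∑ k ∈ s, z k) = ∑ k ∈ s, part1 (z k) := by
  classical
  induction s using Finset.induction_on with
  | empty => simp
  | insert _ _ h ih => simp [Finset.sum_insert h, ih]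

lemma part2_sum (s : Finset ℕ) (z : ℕ → E12) :
    part2 (∑ k ∈ s, z k) = ∑ k ∈ s, part2 (z k) := by
  classical
  induction s using Finset.induction_on with
  | empty => simp
  | insert _ _ h ih => simp [Finset.sum_insert h, ih]

lemma disj_norm {p : ℝ≥0∞} [Fact (1 ≤ p)] (hp : 0 < p.toReal)
    (s : Finset ℕ) (f : ℕ → lp (fun _ : ℕ => ℝ) p)
    (hdisj : ∀ k ∈ s, ∀ l ∈ s, k ≠ l → ∀ i, f k i = 0 ∨ f l i = 0) :
    ‖∑ k ∈ s, f k‖ ^ p.toReal = ∑ k ∈ s, ‖f k‖ ^ p.toReal := by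
  classical
  refine (lp.hasSum_norm hp (∑ k ∈ s, f k)).unique ?_
  have key : (fun i => ‖(∑ k ∈ s, f k : lp _ p) i‖ ^ p.toReal)
      = fun i => ∑ k ∈ s, ‖f k i‖ ^ p.toReal := by
    funext i
    rw [lp.coeFn_sum]
    simp only [Finset.sum_apply]
    by_cases hex : ∃ k ∈ s, f k i ≠ 0
    · obtain ⟨k₀, hk₀, hne⟩ := hex
      have hz : ∀ k ∈ s, k ≠ k₀ → f k i = 0 := by
        intro k hk hkne
        rcases hdisj k hk k₀ hk₀ hkne i with h | h
        · exact h
        · exact absurd h hne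
      rw [Finset.sum_eq_single_of_mem k₀ hk₀ hz,
        Finset.sum_eq_single_of_mem k₀ hk₀ (fun k hk hkne => by
          rw [hz k hk hkne]; simp [Real.zero_rpow hp.ne'])]
    · push_neg at hex
      have : ∀ k ∈ s, f k i = 0 := hex
      rw [Finset.sum_eq_zero this, Finset.sum_eq_zero (fun k hk => by
        rw [this k hk]; simp [Real.zero_rpow hp.ne'])]
      simp [Real.zero_rpow hp.ne']
  rw [key]
  exact hasSum_sum (fun k _ => lp.hasSum_norm hp (f k))

lemma part1_apply_coord (x : E12) (j : ℕ) : part1 x j = coordE x (2 * j + 1) := by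
  have h1 : (2 * j + 1) % 2 = 1 := by omega
  have h2 : (2 * j + 1) / 2 = j := by omega
  simp [coordE, h1, h2]

lemma part2_apply_coord (x : E12) (j : ℕ) : part2 x j = coordE x (2 * j) := by
  have h1 : ¬((2 * j) % 2 = 1) := by omega
  have h2 : (2 * j) / 2 = j := by omega
  simp only [coordE, if_neg h1, h2]

section Part2

variable {z : ℕ → E12} (hz : NormBlockSeq z)

lemma blocks_disj1 (hz : NormBlockSeq z) :
    ∀ k l, k ≠ l → ∀ j, part1 (z k) j = 0 ∨ part1 (z l) j = 0 := by
  obtain ⟨-, N, hN, hsupp⟩ := hz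
  have key : ∀ k l, k < l → ∀ j, coordE (z k) j = 0 ∨ coordE (z l) j = 0 := by
    intro k l hkl j
    by_contra hc
    push_neg at hc
    obtain ⟨h1, h2⟩ := hc
    have a1 := hsupp k j h1
    have a2 := hsupp l j h2
    have : N (k+1) ≤ N l := hN (by omega)
    omega
  intro k l hkl j
  rcases Nat.lt_or_ge k l with h | h
  · rcases key k l h (2*j+1) with h' | h' <;>
      [left; right] <;> rw [part1_apply_coord] <;> exact h'
  · have h : l < k := by omega
    rcases key l k h (2*j+1) with h' | h' <;>
      [right; left] <;> rw [part1_apply_coord] <;> exact h'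

lemma blocks_disj2 (hz : NormBlockSeq z) :
    ∀ k l, k ≠ l → ∀ j, part2 (z k) j = 0 ∨ part2 (z l) j = 0 := by
  obtain ⟨-, N, hN, hsupp⟩ := hz
  have key : ∀ k l, k < l → ∀ j, coordE (z k) j = 0 ∨ coordE (z l) j = 0 := by
    intro k l hkl j
    by_contra hc
    push_neg at hc
    obtain ⟨h1, h2⟩ := hc
    have a1 := hsupp k j h1
    have a2 := hsupp l j h2
    have : N (k+1) ≤ N l := hN (by omega)
    omega
  intro k l hkl j
  rcases Nat.lt_or_ge k l with h | h
  · rcases key k l h (2*j) with h' | h' <;>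
      [left; right] <;> rw [part2_apply_coord] <;> exact h'
  · have h : l < k := by omega
    rcases key l k h (2*j) with h' | h' <;>
      [right; left] <;> rw [part2_apply_coord] <;> exact h'

lemma toReal_one : (1 : ℝ≥0∞).toReal = 1 := by simp
lemma toReal_two : (2 : ℝ≥0∞).toReal = 2 := by simp

/-- key arithmetic -/
lemma arith {C m t : ℝ} (hC : 0 < C) (ht : 0 ≤ t) (h1 : m ≤ C * t) (h2 : t ^ 2 = m)
    (h3 : C ^ 2 < m) : False := by nlinarith

lemma not_equiv_l2 (hz : NormBlockSeq z) (h1 : {k | ‖part1 (z k)‖ = 1}.Infinite) :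
    ¬ SeqEquiv z (fun i => (lp.single 2 i (1 : ℝ) : lp (fun _ : ℕ => ℝ) 2)) := by
  rintro ⟨C, hC, hCs⟩
  obtain ⟨s, hs_sub, hs_card⟩ := h1.exists_subset_card_eq (⌈C^2⌉₊ + 1)
  set m : ℕ := ⌈C^2⌉₊ + 1 with hm
  have hmC : C^2 < (m : ℝ) := by
    calc C^2 ≤ (⌈C^2⌉₊ : ℝ) := Nat.le_ceil _
    _ < (m : ℝ) := by rw [hm]; push_cast; linarith
  -- the z-sum is bounded below by m
  have hlow : (m : ℝ) ≤ ‖∑ i ∈ s, z i‖ := by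
    have h1' : ‖∑ i ∈ s, part1 (z i)‖ ^ ((1:ℝ≥0∞).toReal)
        = ∑ i ∈ s, ‖part1 (z i)‖ ^ ((1:ℝ≥0∞).toReal) :=
      disj_norm (by norm_num) s _ (fun k _ l _ hkl j => blocks_disj1 hz k l hkl j)
    rw [toReal_one] at h1'
    simp only [Real.rpow_one] at h1'
    have : ∑ i ∈ s, ‖part1 (z i)‖ = m := by
      rw [Finset.sum_congr rfl (fun i hi => hs_sub hi), Finset.sum_const, hs_card]
      simp
    rw [this] at h1'
    calc (m : ℝ) = ‖∑ i ∈ s, part1 (z i)‖ := h1'.symm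
    _ = ‖part1 (∑ i ∈ s, z i)‖ := by rw [part1_sum]
    _ ≤ ‖∑ i ∈ s, z i‖ := by rw [norm_eq]; linarith [norm_nonneg (part2 (∑ i ∈ s, z i))]
  -- the e²-sum has norm² = m
  set t : ℝ := ‖∑ i ∈ s, (lp.single 2 i (1:ℝ) : lp (fun _ : ℕ => ℝ) 2)‖ with htdef
  have ht2 : t ^ 2 = m := by
    have h := lp.norm_sum_single (E := fun _ : ℕ => ℝ) (p := 2) (by
      rw [toReal_two]; norm_num) (fun _ => (1:ℝ)) s
    rw [toReal_two] at h
    calc t ^ 2 = t ^ (2:ℝ) := (Real.rpow_two t).symm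
    _ = ∑ _i ∈ s, ‖(1:ℝ)‖ ^ (2:ℝ) := h
    _ = (m:ℝ) := by simp [hs_card]
  have hup := (hCs s (fun _ => 1)).1
  simp only [one_smul] at hup
  exact arith hC (norm_nonneg _) (le_trans hlow hup) ht2 hmC

lemma not_equiv_l1 (hz : NormBlockSeq z) (h0 : {k | ‖part1 (z k)‖ = 0}.Infinite) :
    ¬ SeqEquiv z (fun i => (lp.single 1 i (1 : ℝ) : lp (fun _ : ℕ => ℝ) 1)) := by
  rintro ⟨C, hC, hCs⟩
  obtain ⟨s, hs_sub, hs_card⟩ := h0.exists_subset_card_eq (⌈C^2⌉₊ + 1)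
  set m : ℕ := ⌈C^2⌉₊ + 1 with hm
  have hmC : C^2 < (m : ℝ) := by
    calc C^2 ≤ (⌈C^2⌉₊ : ℝ) := Nat.le_ceil _
    _ < (m : ℝ) := by rw [hm]; push_cast; linarith
  have hpure : ∀ i ∈ s, part1 (z i) = 0 ∧ ‖part2 (z i)‖ = 1 := by
    intro i hi
    have h1 : ‖part1 (z i)‖ = 0 := hs_sub hi
    have h2 := norm_eq (z i)
    rw [hz.1 i, h1] at h2
    exact ⟨norm_eq_zero.mp h1, by linarith⟩
  -- the z-sum satisfies ‖∑ z‖² = m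
  set t : ℝ := ‖∑ i ∈ s, z i‖ with htdef
  have ht2 : t ^ 2 = m := by
    have h2' : ‖∑ i ∈ s, part2 (z i)‖ ^ ((2:ℝ≥0∞).toReal)
        = ∑ i ∈ s, ‖part2 (z i)‖ ^ ((2:ℝ≥0∞).toReal) :=
      disj_norm (by rw [toReal_two]; norm_num) s _
        (fun k hk l hl hkl j => blocks_disj2 hz k l hkl j)
    rw [toReal_two] at h2'
    have hsum : ∑ i ∈ s, ‖part2 (z i)‖ ^ (2:ℝ) = (m:ℝ) := by
      have : ∀ i ∈ s, ‖part2 (z i)‖ ^ (2:ℝ) = 1 := fun i hi => by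
        rw [(hpure i hi).2, Real.one_rpow]
      rw [Finset.sum_congr rfl this]
      simp [hs_card]
    have hts : t = ‖∑ i ∈ s, part2 (z i)‖ := by
      show ‖∑ i ∈ s, z i‖ = _
      rw [norm_eq, part1_sum, part2_sum]
      have : ∑ i ∈ s, part1 (z i) = 0 :=
        Finset.sum_eq_zero (fun i hi => (hpure i hi).1)
      rw [this]
      simp
    calc t ^ 2 = t ^ (2:ℝ) := (Real.rpow_two t).symm
    _ = ∑ i ∈ s, ‖part2 (z i)‖ ^ (2:ℝ) := by rw [hts]; exact h2'
    _ = (m:ℝ) := hsum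
  -- the e¹-sum has norm = m
  have he1 : ‖∑ i ∈ s, (lp.single 1 i (1:ℝ) : lp (fun _ : ℕ => ℝ) 1)‖ = m := by
    have := lp.norm_sum_single (E := fun _ : ℕ => ℝ) (p := 1) (by
      rw [toReal_one]; norm_num) (fun _ => (1:ℝ)) s
    rw [toReal_one] at this
    simp only [Real.rpow_one] at this
    rw [this]; simp [hs_card]
  have hup := (hCs s (fun _ => 1)).2
  simp only [one_smul] at hup
  rw [he1] at hup
  exact arith hC (norm_nonneg _) hup ht2 hmC

end Part2

noncomputable def play (c : ℕ → Bool) : ℕ → E12 := fun n => TT (c n) n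

section Game
variable (σ : List E12 → ℕ → Option Bool)

/-- the step relation between states -/
def StepRel (s s' : ℕ × (ℕ → Bool)) : Prop :=
  s.1 < s'.1 ∧ (∀ i < s'.1, s'.2 i = s.2 i) ∧
  (∀ i, s'.1 ≤ i → s'.2 i = !(s.2 s.1)) ∧
  (∃ k n, s.1 ≤ k ∧ k < s'.1 ∧ n ≤ s'.1 ∧ σ (hist (play s.2) n) k = some true)

lemma step_exists
    (hinf : ∀ x : ℕ → E12, NormBlockSeq x →
      {k | ∃ n, σ (hist x n) k = some true}.Infinite) :
    ∀ s : ℕ × (ℕ → Bool), ∃ s', StepRel σ s s' := by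
  rintro ⟨L, c⟩
  obtain ⟨k, hk_mem, hkL⟩ := (hinf (play c) (nbs c)).exists_gt L
  obtain ⟨n, hn⟩ := hk_mem
  refine ⟨(max (max n L) k + 1, fun m => if m < max (max n L) k + 1 then c m else !(c L)), ?_, ?_, ?_, ?_⟩
  · simp only; omega
  · intro i hi; simp only at hi ⊢; rw [if_pos hi]
  · intro i hi; simp only at hi ⊢; rw [if_neg (by omega)]
  · exact ⟨k, n, by omega, by simp only; omega, by simp only; omega, hn⟩

variable (hinf : ∀ x : ℕ → E12, NormBlockSeq x →
      {k | ∃ n, σ (hist x n) k = some true}.Infinite)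

include hinf

noncomputable def LC : ℕ → ℕ × (ℕ → Bool) :=
  fun m => (fun s => Classical.choose (step_exists σ hinf s))^[m] (0, fun _ => true)

lemma LC_step (m : ℕ) : StepRel σ (LC σ hinf m) (LC σ hinf (m + 1)) := by
  have : LC σ hinf (m+1) = Classical.choose (step_exists σ hinf (LC σ hinf m)) := by
    unfold LC; rw [Function.iterate_succ_apply']
  rw [this]
  exact Classical.choose_spec (step_exists σ hinf (LC σ hinf m))

lemma LC_zero : LC σ hinf 0 = (0, fun _ => true) := rfl

lemma L_mono : StrictMono (fun m => (LC σ hinf m).1) :=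
  strictMono_nat_of_lt_succ (fun m => (LC_step σ hinf m).1)

lemma L_ge (m : ℕ) : m ≤ (LC σ hinf m).1 := by
  induction m with
  | zero => omega
  | succ m ih => have := (LC_step σ hinf m).1; omega

lemma agree (m m' : ℕ) (h : m ≤ m') : ∀ i < (LC σ hinf m).1,
    (LC σ hinf m').2 i = (LC σ hinf m).2 i := by
  induction m' with
  | zero => intro i hi; have : m = 0 := by omega
            subst this; rfl
  | succ m' ih =>
    intro i hi
    rcases Nat.lt_or_ge m (m'+1) with h' | h'
    · have hm : m ≤ m' := by omega
      have h1 := (LC_step σ hinf m').2.1 i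
        (lt_of_lt_of_le hi ((L_mono σ hinf).monotone (by omega : m ≤ m'+1)))
      rw [h1, ih hm i hi]
    · have : m = m' + 1 := by omega
      subst this; rfl

noncomputable def cf : ℕ → Bool := fun n => (LC σ hinf (n + 1)).2 n

lemma cf_eq (m n : ℕ) (h : n < (LC σ hinf m).1) : cf σ hinf n = (LC σ hinf m).2 n := by
  rcases le_or_gt m (n+1) with h' | h'
  · exact agree σ hinf m (n+1) h' n h
  · have hn : n < (LC σ hinf (n+1)).1 := lt_of_lt_of_le (by omega) (L_ge σ hinf (n+1))
    exact (agree σ hinf (n+1) m (by omega) n hn).symm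

def bb (m : ℕ) : Bool := decide (m % 2 = 0)

lemma tail_val (m : ℕ) : ∀ i, (LC σ hinf m).1 ≤ i → (LC σ hinf m).2 i = bb m := by
  induction m with
  | zero => intro i _; rfl
  | succ m ih =>
    intro i hi
    rw [(LC_step σ hinf m).2.2.1 i hi, ih (LC σ hinf m).1 le_rfl]
    cases Nat.even_or_odd m with
    | inl h => have h0 : m % 2 = 0 := Nat.even_iff.mp h
               simp [bb, h0]; omega
    | inr h => have h0 : m % 2 = 1 := Nat.odd_iff.mp h
               simp [bb, h0]; omega

omit hinf in
lemma hist_play_eq (c c' : ℕ → Bool) (n : ℕ) (h : ∀ i < n, c i = c' i) :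
    hist (play c) n = hist (play c') n := by
  unfold hist
  congr 1
  funext i
  simp only [play]
  rw [h i i.2]

/-- the final outcome of the construction -/
lemma main_exists : ∃ x : ℕ → E12, NormBlockSeq x ∧
    {k | (∃ n, σ (hist x n) k = some true) ∧ ‖part1 (x k)‖ = 1}.Infinite ∧
    {k | (∃ n, σ (hist x n) k = some true) ∧ ‖part1 (x k)‖ = 0}.Infinite := by
  have key : ∀ m, ∃ k, (LC σ hinf m).1 ≤ k ∧ k < (LC σ hinf (m+1)).1 ∧
      (∃ n, σ (hist (play (cf σ hinf)) n) k = some true) ∧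
      cf σ hinf k = bb m := by
    intro m
    obtain ⟨k, n, hk1, hk2, hn, hσ⟩ := (LC_step σ hinf m).2.2.2
    refine ⟨k, hk1, hk2, ⟨n, ?_⟩, ?_⟩
    · rw [hist_play_eq (cf σ hinf) (LC σ hinf m).2 n ?_]
      · exact hσ
      · intro i hi
        rw [cf_eq σ hinf (m+1) i (by omega), (LC_step σ hinf m).2.1 i (by omega)]
    · rw [cf_eq σ hinf (m+1) k hk2, (LC_step σ hinf m).2.1 k hk2]
      exact tail_val σ hinf m k hk1
  choose K hK1 hK2 hK3 hK4 using key
  have hKmono : StrictMono K := strictMono_nat_of_lt_succ (fun m =>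
    lt_of_lt_of_le (hK2 m) (hK1 (m+1)))
  have norm_phase : ∀ m, ‖part1 (play (cf σ hinf) (K m))‖ = if bb m then 1 else 0 := by
    intro m
    simp only [play, TT, hK4 m]
    cases h : bb m <;> simp [h, part1_uu_norm, part1_vv_norm]
  refine ⟨play (cf σ hinf), nbs _, ?_, ?_⟩
  · refine Set.infinite_of_injective_forall_mem
      (f := fun j : ℕ => K (2 * j)) ?_ ?_
    · intro a b hab
      have := hKmono.injective hab; omega
    · intro j
      refine ⟨hK3 (2*j), ?_⟩
      have hb0 : (2*j) % 2 = 0 := by omega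
      have hb : bb (2*j) = true := by simp [bb, hb0]
      rw [norm_phase (2*j), hb, if_pos rfl]
  · refine Set.infinite_of_injective_forall_mem
      (f := fun j : ℕ => K (2 * j + 1)) ?_ ?_
    · intro a b hab
      have := hKmono.injective hab; omega
    · intro j
      refine ⟨hK3 (2*j+1), ?_⟩
      have hb0 : (2*j+1) % 2 = 1 := by omega
      have hb : bb (2*j+1) = false := by simp [bb, hb0]
      rw [norm_phase (2*j+1), hb, if_neg (by simp)]

end Game

end Stmt14


open Stmt14 in
theorem stmt14
    -- a strategy for I in (SG)₀: after II's moves `x_0, …, x_{n-1}` it gives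
    -- I's announcement `σ (hist x n) k ∈ {#, 0, 1}` about coordinate `k < n`
    (σ : List E12 → ℕ → Option Bool)
    -- coherence: a committed digit is never changed
    (hcoh : ∀ (x : ℕ → E12) (k n m : ℕ), k < n → n ≤ m → ∀ v : Bool,
      σ (hist x n) k = some v → σ (hist x m) k = some v)
    -- every coordinate is eventually decided
    (hdec : ∀ x : ℕ → E12, NormBlockSeq x →
      ∀ k, ∃ n, k < n ∧ (σ (hist x n) k).isSome)
    -- I always selects an infinite subsequence
    (hinf : ∀ x : ℕ → E12, NormBlockSeq x →
      {k | ∃ n, σ (hist x n) k = some true}.Infinite) :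
    (∃ x : ℕ → E12, NormBlockSeq x ∧
      {k | (∃ n, σ (hist x n) k = some true) ∧ ‖part1 (x k)‖ = 1}.Infinite ∧
      {k | (∃ n, σ (hist x n) k = some true) ∧ ‖part1 (x k)‖ = 0}.Infinite) ∧
    ∀ z : ℕ → E12, NormBlockSeq z →
      {k | ‖part1 (z k)‖ = 1}.Infinite → {k | ‖part1 (z k)‖ = 0}.Infinite →
      ¬ SeqEquiv z (fun i => (lp.single 1 i (1 : ℝ) : lp (fun _ : ℕ => ℝ) 1)) ∧
      ¬ SeqEquiv z (fun i => (lp.single 2 i (1 : ℝ) : lp (fun _ : ℕ => ℝ) 2)) := by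
  constructor
  · exact Stmt14.main_exists σ hinf
  · intro z hz h1 h0
    exact ⟨Stmt14.not_equiv_l1 hz h0, Stmt14.not_equiv_l2 hz h1⟩
end

section
/- Let F be a Banach space with F.D.D. (F_i) and E ⊆ F a closed subspace, Δ = (δ_i) > 0 a decreasing null sequence. Every Δ-block tree T ⊆ S_E^{<ℕ} has a subtree S ⊆ T such that every infinite branch of S is a Δ-block sequence. -/
/-!
STATEMENT 18: Let `F` be a Banach space with F.D.D. `(F_i)` (represented by its
interval projections `P a b`), `E ⊆ F` a closed subspace and `Δ = (δ_i)` a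
decreasing null sequence of positive reals.  Every `Δ`-block tree
`T ⊆ S_E^{<ℕ}` has a subtree `S ⊆ T` (itself a `Δ`-block tree) such that every
infinite branch of `S` is a `Δ`-block sequence.
-/

namespace Stmt18

variable {F : Type*} [NormedAddCommGroup F] [NormedSpace ℝ F]

/-- `(x_i)` is a `Δ`-block sequence: successive intervals `I_0 < I_1 < …` with
`‖x_i − P_{I_i}(x_i)‖ < δ_i`. -/
def IsDeltaBlock (P : ℕ → ℕ → F →L[ℝ] F) (δ : ℕ → ℝ) (x : ℕ → F) : Prop :=
  ∃ I : ℕ → ℕ × ℕ, (∀ i, (I i).1 ≤ (I i).2) ∧ (∀ i, (I i).2 < (I (i + 1)).1) ∧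
    ∀ i, ‖x i - P (I i).1 (I i).2 (x i)‖ < δ i

/-- A `Δ`-block tree on the unit sphere of `E`: nonempty, closed under initial
segments, and at every node the immediate successors form a sequence of unit
vectors of `E` which are `δ_n`-close to interval projections with left
endpoints tending to infinity (`n` = length of the node). -/
def IsDeltaBlockTree (P : ℕ → ℕ → F →L[ℝ] F) (δ : ℕ → ℝ) (E : Submodule ℝ F)
    (T : Set (List F)) : Prop :=
  T.Nonempty ∧ (∀ l ∈ T, ∀ n, l.take n ∈ T) ∧
  ∀ l ∈ T, ∃ y : ℕ → F, (∀ i, y i ∈ E ∧ ‖y i‖ = 1) ∧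
    (∀ i, l ++ [y i] ∈ T) ∧ (∀ z, l ++ [z] ∈ T → ∃ i, z = y i) ∧
    ∃ I : ℕ → ℕ × ℕ, (∀ i, (I i).1 ≤ (I i).2) ∧
      (∀ i, ‖y i - P (I i).1 (I i).2 (y i)‖ < δ l.length) ∧
      Filter.Tendsto (fun i => (I i).1) Filter.atTop Filter.atTop

def IsBranch (T : Set (List F)) (x : ℕ → F) : Prop :=
  ∀ n, (List.ofFn fun i : Fin n => x i) ∈ T

end Stmt18

/-!
Prune `T` so that a vector may follow a node only if it comes with an interval starting beyond
the end of the interval attached to the node's last entry.  A vector may occur several times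
among the successors of a node, so the interval attached to an entry is the admissible one of
least index; it then depends on the node alone, and along every branch of the pruned tree the
attached intervals are successive.  As left endpoints tend to infinity, only finitely many
indices are discarded at each node, so the pruned tree is again a `Δ`-block tree.
-/

open Filter

namespace Stmt18

theorem exists_reindex_of_tendsto {f : ℕ → ℕ} (hf : Tendsto f atTop atTop) (b : ℕ) :
    ∃ g : ℕ → ℕ, Set.range g = {i | b ≤ f i} ∧ Tendsto (f ∘ g) atTop atTop := by
  obtain ⟨N, hN⟩ := eventually_atTop.1 (hf.eventually_ge_atTop b)
  let g i := if b ≤ f i then i else N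
  refine ⟨g, Set.ext fun j => ⟨?_, fun hj => ⟨j, if_pos hj⟩⟩, hf.congr' ?_⟩
  · rintro ⟨i, rfl⟩
    by_cases h : b ≤ f i <;> simp [g, h, hN N le_rfl]
  · filter_upwards [eventually_ge_atTop N] with i hi
    simp [g, hN i hi]

noncomputable section Pruning

variable {α : Type*} (y : List α → ℕ → α) (I : List α → ℕ → ℕ × ℕ)

def attachedIndex (l : List α) (b : ℕ) (z : α) : ℕ :=
  sInf {j | y l j = z ∧ b ≤ (I l j).1}

def boundStep (p : List α × ℕ) (z : α) : List α × ℕ :=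
  (p.1 ++ [z], (I p.1 (attachedIndex y I p.1 p.2 z)).2 + 1)

/-- One more than the right end of the interval attached to the last entry of `l`
(`0` for `l = []`). -/
def startBound (l : List α) : ℕ :=
  (l.foldl (boundStep y I) ([], 0)).2

inductive Pruned : List α → Prop
  | nil : Pruned []
  | snoc {l : List α} {j : ℕ} :
      Pruned l → startBound y I l ≤ (I l j).1 → Pruned (l ++ [y l j])

variable {y I}

theorem foldl_boundStep (l : List α) :
    l.foldl (boundStep y I) ([], 0) = (l, startBound y I l) := by
  refine Prod.ext ?_ rfl
  induction l using List.reverseRecOn with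
  | nil => rfl
  | append_singleton l z ih => simp [List.foldl_append, boundStep, ih]

theorem startBound_append_singleton (l : List α) (z : α) :
    startBound y I (l ++ [z]) = (I l (attachedIndex y I l (startBound y I l) z)).2 + 1 := by
  rw [startBound, List.foldl_append, foldl_boundStep]
  rfl

theorem pruned_append_singleton_iff {l : List α} {z : α} :
    Pruned y I (l ++ [z]) ↔ Pruned y I l ∧ ∃ j, y l j = z ∧ startBound y I l ≤ (I l j).1 := by
  refine ⟨fun h => ?_, fun ⟨hl, j, hj, hjI⟩ => hj ▸ .snoc hl hjI⟩
  generalize hm : l ++ [z] = m at h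
  rcases h with _ | ⟨hl, hj⟩
  · simp at hm
  · obtain ⟨rfl, rfl⟩ := List.append_singleton_inj.1 hm
    exact ⟨hl, _, rfl, hj⟩

theorem Pruned.attachedIndex_spec {l : List α} {z : α} (h : Pruned y I (l ++ [z])) :
    y l (attachedIndex y I l (startBound y I l) z) = z ∧
      startBound y I l ≤ (I l (attachedIndex y I l (startBound y I l) z)).1 :=
  Nat.sInf_mem (pruned_append_singleton_iff.1 h).2

theorem Pruned.take {l : List α} (hl : Pruned y I l) (n : ℕ) : Pruned y I (l.take n) := by
  induction hl with
  | nil => simpa using Pruned.nil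
  | @snoc l j hl hj ih =>
    by_cases hn : n ≤ l.length
    · rwa [List.take_append_of_le_length hn]
    · rw [List.take_of_length_le (by simpa using not_le.1 hn)]
      exact .snoc hl hj

theorem Pruned.exists_reindex_successors {l : List α} (hl : Pruned y I l)
    (hI : Tendsto (fun i => (I l i).1) atTop atTop) :
    ∃ g : ℕ → ℕ, (∀ i, Pruned y I (l ++ [y l (g i)])) ∧
      (∀ z, Pruned y I (l ++ [z]) → ∃ i, z = y l (g i)) ∧
      Tendsto (fun i => (I l (g i)).1) atTop atTop := by
  obtain ⟨g, hg, hgI⟩ := exists_reindex_of_tendsto hI (startBound y I l)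
  refine ⟨g, fun i => .snoc hl (hg.subset ⟨i, rfl⟩), fun z hz => ?_, hgI⟩
  obtain ⟨-, j, rfl, hj⟩ := pruned_append_singleton_iff.1 hz
  obtain ⟨i, rfl⟩ : j ∈ Set.range g := hg.symm.subset hj
  exact ⟨i, rfl⟩

theorem Pruned.mem {T : Set (List α)} (hnil : [] ∈ T) (hT : ∀ l ∈ T, ∀ j, l ++ [y l j] ∈ T)
    {l : List α} (hl : Pruned y I l) : l ∈ T := by
  induction hl with
  | nil => exact hnil
  | snoc _ _ ih => exact hT _ ih _

theorem exists_successive_of_pruned_branch {x : ℕ → α}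
    (hx : ∀ n, Pruned y I (List.ofFn fun i : Fin n => x i)) :
    ∃ j : ℕ → ℕ, ∀ n, y (List.ofFn fun i : Fin n => x i) (j n) = x n ∧
      (I (List.ofFn fun i : Fin n => x i) (j n)).2 <
        (I (List.ofFn fun i : Fin (n + 1) => x i) (j (n + 1))).1 := by
  have hsnoc (n : ℕ) : (List.ofFn fun i : Fin (n + 1) => x i) =
      (List.ofFn fun i : Fin n => x i) ++ [x n] := List.ofFn_succ_last
  have hspec (n : ℕ) := (hsnoc n ▸ hx (n + 1)).attachedIndex_spec
  refine ⟨fun n => attachedIndex y I _ (startBound y I _) (x n), fun n => ⟨(hspec n).1, ?_⟩⟩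
  calc _ < startBound y I (List.ofFn fun i : Fin (n + 1) => x i) := by
        rw [hsnoc, startBound_append_singleton]
        exact Nat.lt_succ_self _
    _ ≤ _ := (hspec (n + 1)).2

end Pruning

end Stmt18

open Stmt18

theorem stmt18_general {F : Type*} [NormedAddCommGroup F] [NormedSpace ℝ F]
    (P : ℕ → ℕ → F →L[ℝ] F)  -- interval projections of the F.D.D.
    (E : Submodule ℝ F)
    (δ : ℕ → ℝ)
    (T : Set (List F)) (hT : Stmt18.IsDeltaBlockTree P δ E T) :
    ∃ S : Set (List F), S ⊆ T ∧ Stmt18.IsDeltaBlockTree P δ E S ∧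
      ∀ x : ℕ → F, Stmt18.IsBranch S x → Stmt18.IsDeltaBlock P δ x := by
  obtain ⟨⟨l₀, hl₀⟩, htake, hsucc⟩ := hT
  choose! y hy hyT _ I hI hIP hItend using hsucc
  have hST (l : List F) (hl : Pruned y I l) : l ∈ T :=
    hl.mem (by simpa using htake l₀ hl₀ 0) hyT
  refine ⟨{l | Pruned y I l}, hST, ⟨⟨[], .nil⟩, fun l hl n => hl.take n, fun l hl => ?_⟩,
    fun x hx => ?_⟩
  · obtain ⟨g, hgS, hgall, hgI⟩ := hl.exists_reindex_successors (hItend l (hST l hl))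
    exact ⟨y l ∘ g, fun i => hy l (hST l hl) (g i), hgS, hgall, I l ∘ g,
      fun i => hI l (hST l hl) (g i), fun i => hIP l (hST l hl) (g i), hgI⟩
  · obtain ⟨j, hj⟩ := exists_successive_of_pruned_branch hx
    refine ⟨fun n => I _ (j n), fun n => hI _ (hST _ (hx n)) _, fun n => (hj n).2, fun n => ?_⟩
    simpa [(hj n).1] using hIP _ (hST _ (hx n)) (j n)

theorem stmt18 {F : Type*} [NormedAddCommGroup F] [NormedSpace ℝ F] [CompleteSpace F]
    (P : ℕ → ℕ → F →L[ℝ] F)  -- interval projections of the F.D.D.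
    (E : Submodule ℝ F) (hE : IsClosed (E : Set F))
    (δ : ℕ → ℝ) (hδpos : ∀ i, 0 < δ i) (hδdec : ∀ i, δ (i + 1) ≤ δ i)
    (hδnull : Filter.Tendsto δ Filter.atTop (nhds 0))
    (T : Set (List F)) (hT : Stmt18.IsDeltaBlockTree P δ E T) :
    ∃ S : Set (List F), S ⊆ T ∧ Stmt18.IsDeltaBlockTree P δ E S ∧
      ∀ x : ℕ → F, Stmt18.IsBranch S x → Stmt18.IsDeltaBlock P δ x :=
  stmt18_general P E δ T hT
end
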